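/- With Φ(a ⊗ u) = ½(∑ x_i a ⊗ e_i u + a ⊗ u) on M = A_n ⊗_ℝ C^{0,n+1} and β̂ the A_n-bilinear form defined by β̂(a ⊗ x, b ⊗ y) = ab·β(x,y) where β is the trace form of C^{0,n+1}, one has β̂(Φ(m), m') = β̂(m, Φ(m')) for all m, m' ∈ M; i.e. Φ is self-adjoint with respect to β̂. -/
import Mathlib


open scoped TensorProduct

set_option synthInstance.maxHeartbeats 1000000
set_option maxHeartbeats 1000000

/-- The positive definite quadratic form `∑ vᵢ²` on `ℝⁿ`. -/
noncomputable def Qpos (n : ℕ) : QuadraticForm ℝ (Fin n → ℝ) :=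
  QuadraticMap.weightedSumSquares ℝ (fun _ : Fin n => (1 : ℝ))

/-- The Clifford algebra `C^{0,n}` of the positive definite form on `ℝⁿ`. -/
abbrev Cliff (n : ℕ) : Type := CliffordAlgebra (Qpos n)

/-- The generators `e i` of the Clifford algebra. -/
noncomputable def eC {n : ℕ} (i : Fin n) : Cliff n :=
  CliffordAlgebra.ι (Qpos n) (Pi.single i 1)

/-- The ideal `(∑ xᵢ² - 1)` of `ℝ[x₀,…,xₙ]`. -/
noncomputable def sphereRel (n : ℕ) : Ideal (MvPolynomial (Fin (n + 1)) ℝ) :=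
  Ideal.span {(∑ i : Fin (n + 1), MvPolynomial.X i ^ 2) - 1}

/-- The coordinate ring `Aₙ = ℝ[x₀,…,xₙ]/(∑ xᵢ² - 1)` of the real `n`-sphere. -/
abbrev Asph (n : ℕ) : Type := MvPolynomial (Fin (n + 1)) ℝ ⧸ sphereRel n

/-- The coordinate functions `xᵢ ∈ Aₙ`. -/
noncomputable def xv {n : ℕ} (i : Fin (n + 1)) : Asph n :=
  Ideal.Quotient.mk _ (MvPolynomial.X i)

/-- The free module (indeed algebra) `M = Aₙ ⊗ℝ C^{0,n+1}`. -/
abbrev Msph (n : ℕ) : Type := Asph n ⊗[ℝ] Cliff (n + 1)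

/-- The element `𝐱 = ∑ xᵢ ⊗ eᵢ` of `Aₙ ⊗ℝ C^{0,n+1}`. -/
noncomputable def bx (n : ℕ) : Msph n := ∑ i : Fin (n + 1), xv i ⊗ₜ[ℝ] eC i

/-- The operator `Φ = ½(𝐱 + 1)`, acting by left multiplication, so that
`Φ(a ⊗ u) = ½(∑ xᵢ a ⊗ eᵢ u + a ⊗ u)`. -/
noncomputable def Phi (n : ℕ) : Msph n →ₗ[ℝ] Msph n :=
  LinearMap.mulLeft ℝ ((2 : ℝ)⁻¹ • (bx n + 1))

/-- The trace form `β(x, y) = Tr(L_{σ(x)·y})` on the Clifford algebra, where `σ` is the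
canonical (reversing) involution and `L_z` is left multiplication by `z`. -/
noncomputable def betaC (n : ℕ) : LinearMap.BilinForm ℝ (Cliff n) :=
  (LinearMap.compr₂ (LinearMap.mul ℝ (Cliff n))
      ((LinearMap.trace ℝ (Cliff n)) ∘ₗ (LinearMap.mul ℝ (Cliff n)))).comp
    (CliffordAlgebra.reverse (Q := Qpos n))

/-- `β̂`: the `Aₙ`-bilinear extension of the trace form `β` to `M = Aₙ ⊗ℝ C^{0,n+1}`,
so `β̂(a ⊗ x, b ⊗ y) = a·b·β(x,y)`. -/
noncomputable def betaHat (n : ℕ) : LinearMap.BilinForm (Asph n) (Msph n) :=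
  (betaC (n + 1)).baseChange (Asph n)

lemma betaC_eC_mul (n : ℕ) (i : Fin n) (x y : Cliff n) :
    betaC n (eC i * x) y = betaC n x (eC i * y) := by
  simp only [betaC, LinearMap.coe_comp, Function.comp_apply, LinearMap.compr₂_apply,
    LinearMap.mul_apply']
  rw [CliffordAlgebra.reverse.map_mul]
  simp only [eC, CliffordAlgebra.reverse_ι]
  rw [mul_assoc]

lemma Msph.mulZero {n : ℕ} (a : Msph n) : a * (0 : Msph n) = 0 :=
  map_zero (LinearMap.mulLeft ℝ a)

lemma Msph.mulAdd {n : ℕ} (a b c : Msph n) : a * (b + c) = a * b + a * c :=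
  map_add (LinearMap.mulLeft ℝ a) b c

lemma Msph.addMul {n : ℕ} (a b c : Msph n) : (a + b) * c = a * c + b * c :=
  map_add (LinearMap.mulRight ℝ c) a b

lemma Msph.sumMul {n : ℕ} (f : Fin (n + 1) → Msph n) (a : Msph n) :
    (∑ i : Fin (n + 1), f i) * a = ∑ i : Fin (n + 1), f i * a :=
  map_sum (LinearMap.mulRight ℝ a) f Finset.univ

lemma Msph.smulMul {n : ℕ} (r : ℝ) (a b : Msph n) : (r • a) * b = r • (a * b) :=
  map_smul (LinearMap.mulRight ℝ b) r a

lemma betaHat_tmul_key (n : ℕ) (i : Fin (n + 1)) (m m' : Msph n) :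
    betaHat n ((xv i ⊗ₜ[ℝ] eC i) * m) m' = betaHat n m ((xv i ⊗ₜ[ℝ] eC i) * m') := by
  induction m using TensorProduct.induction_on with
  | zero => rw [Msph.mulZero]; simp
  | add p q hp hq =>
    rw [Msph.mulAdd, map_add, map_add, LinearMap.add_apply, hp, hq, LinearMap.add_apply]
  | tmul a u =>
    induction m' using TensorProduct.induction_on with
    | zero => rw [Msph.mulZero]; simp
    | add p q hp hq => rw [Msph.mulAdd, map_add, map_add, hp, hq]
    | tmul b v =>
      rw [Algebra.TensorProduct.tmul_mul_tmul, Algebra.TensorProduct.tmul_mul_tmul]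
      rw [betaHat, LinearMap.BilinForm.baseChange_tmul, LinearMap.BilinForm.baseChange_tmul,
        betaC_eC_mul]
      ring_nf

/-- `Φ` is self-adjoint with respect to `β̂`. -/
theorem stmt3 (n : ℕ) :
    ∀ m m' : Msph n, betaHat n (Phi n m) m' = betaHat n m (Phi n m') := by
  intro m m'
  have key : betaHat n (bx n * m) m' = betaHat n m (bx n * m') := by
    rw [bx, Msph.sumMul, Msph.sumMul, map_sum, LinearMap.coe_sum, Finset.sum_apply, map_sum]
    exact Finset.sum_congr rfl fun i _ => betaHat_tmul_key n i m m'
  have hPhi : ∀ z : Msph n, Phi n z = (2 : ℝ)⁻¹ • (bx n * z + z) := by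
    intro z
    rw [Phi, LinearMap.mulLeft_apply, Msph.smulMul, Msph.addMul]
    exact congrArg (fun w => (2 : ℝ)⁻¹ • (bx n * z + w)) (one_mul z)
  rw [hPhi, hPhi, LinearMap.map_smul_of_tower, LinearMap.smul_apply,
    LinearMap.map_smul_of_tower, map_add, map_add, LinearMap.add_apply, key]
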